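/- Let d, d_x, d_y ∈ ℕ, let Θ ⊂ ℝ^d be a nonempty compact set, and let A : Θ → ℝ^{d_y×d_x}, B : Θ → ℝ^{d_y×d_y}, C : Θ → ℝ^{d_x×d_x} and D : Θ → ℝ^{d_x×d_x} be continuous mappings such that, for every θ ∈ Θ, the matrices B(θ) and D(θ) are symmetric positive definite and A(θ)ᵀA(θ) is positive definite (i.e. A(θ) has full column rank). Then there exist constants κ₁, κ₂ ∈ (0, ∞) such that for all θ ∈ Θ, x, x' ∈ ℝ^{d_x} and y ∈ ℝ^{d_y}: φ_{d_y}(y; A(θ)x', B(θ)) · φ_{d_x}(x; C(θ)x', D(θ)) ≤ κ₁ · e^{κ₁‖y‖²} · exp( −(‖x‖ − κ₂‖y‖)² / κ₁ ). -/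

import Mathlib

open Matrix

/-- The Euclidean norm on `ℝ^n`. -/
noncomputable def euclNorm {n : ℕ} (x : Fin n → ℝ) : ℝ := Real.sqrt (∑ i, (x i) ^ 2)

/-- The density of the `n`-dimensional Gaussian distribution with mean `m` and
(symmetric positive definite) covariance matrix `V`, with respect to Lebesgue measure. -/
noncomputable def gaussDensity {n : ℕ} (m : Fin n → ℝ) (V : Matrix (Fin n) (Fin n) ℝ)
    (x : Fin n → ℝ) : ℝ :=
  ((2 * Real.pi) ^ n * V.det) ^ (-(1 : ℝ) / 2) *
    Real.exp (-((x - m) ⬝ᵥ (V⁻¹ *ᵥ (x - m))) / 2)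

/-! By compactness of `Θ` and continuity, the following bounds hold uniformly in `θ`: the Gaussian
normalising constants are bounded, `v ⬝ᵥ B⁻¹ v ≥ β_B ‖v‖²` and `v ⬝ᵥ D⁻¹ v ≥ β_D ‖v‖²`, and
`a ‖x'‖ ≤ ‖A x'‖`, `‖C x'‖ ≤ c ‖x'‖` (minimise or maximise a homogeneous function over
`Θ × sphere`). The product of densities is then at most
`N exp (-(β_B ‖y - A x'‖² + β_D ‖x - C x'‖²))`, while the triangle inequality gives
`‖x‖ ≤ ‖x - C x'‖ + (c / a) (‖y - A x'‖ + ‖y‖)`. With `κ₂ = c / a`, the square of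
`‖x‖ - κ₂ ‖y‖` is thus bounded by a multiple of the exponent plus `κ₂² ‖y‖²`, and the latter is
absorbed by `e^{κ₁ ‖y‖²}`. -/

open Set Function

section Homogeneous

variable {X E : Type*} [NormedAddCommGroup E] [NormedSpace ℝ E]
  {q : X → E → ℝ} {p : ℕ}

lemma eq_norm_pow_mul_of_homogeneous (hq : ∀ θ (c : ℝ), 0 ≤ c → ∀ v, q θ (c • v) = c ^ p * q θ v)
    (θ : X) {v : E} (hv : v ≠ 0) : q θ v = ‖v‖ ^ p * q θ (‖v‖⁻¹ • v) := by
  rw [hq θ _ (inv_nonneg.2 (norm_nonneg v)), ← mul_assoc, ← mul_pow,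
    mul_inv_cancel₀ (norm_ne_zero_iff.2 hv), one_pow, one_mul]

lemma eq_zero_of_homogeneous (hq : ∀ θ (c : ℝ), 0 ≤ c → ∀ v, q θ (c • v) = c ^ p * q θ v)
    (hp : p ≠ 0) (θ : X) : q θ 0 = 0 := by
  simpa [zero_pow hp] using hq θ 0 le_rfl 0

variable [TopologicalSpace X] [ProperSpace E] {K : Set X}

theorem IsCompact.exists_pos_mul_norm_pow_le (hK : IsCompact K)
    (hcont : ContinuousOn (uncurry q) (K ×ˢ univ)) (hp : p ≠ 0)
    (hq : ∀ θ (c : ℝ), 0 ≤ c → ∀ v, q θ (c • v) = c ^ p * q θ v)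
    (hpos : ∀ θ ∈ K, ∀ v ≠ 0, 0 < q θ v) :
    ∃ β > 0, ∀ θ ∈ K, ∀ v, β * ‖v‖ ^ p ≤ q θ v := by
  have hsphere : ∀ θ ∈ K, ∀ {v : E}, v ≠ 0 → (θ, ‖v‖⁻¹ • v) ∈ K ×ˢ Metric.sphere 0 1 :=
    fun θ hθ v hv => ⟨hθ, by simpa using norm_smul_inv_norm (𝕜 := ℝ) hv⟩
  rcases (K ×ˢ Metric.sphere (0 : E) 1).eq_empty_or_nonempty with hemp | hne
  · refine ⟨1, one_pos, fun θ hθ v => ?_⟩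
    obtain rfl : v = 0 := by
      by_contra hv
      simpa [hemp] using hsphere θ hθ hv
    simp [eq_zero_of_homogeneous hq hp, zero_pow hp]
  obtain ⟨⟨θ₀, v₀⟩, ⟨hθ₀, hv₀S⟩, hmin⟩ := (hK.prod (isCompact_sphere 0 1)).exists_isMinOn hne
    (hcont.mono (prod_mono le_rfl (subset_univ _)))
  have hv₀ : v₀ ≠ 0 := ne_zero_of_mem_unit_sphere ⟨v₀, hv₀S⟩
  refine ⟨q θ₀ v₀, hpos θ₀ hθ₀ v₀ hv₀, fun θ hθ v => ?_⟩
  rcases eq_or_ne v 0 with rfl | hv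
  · simp [eq_zero_of_homogeneous hq hp, zero_pow hp]
  rw [eq_norm_pow_mul_of_homogeneous hq θ hv, mul_comm]
  exact mul_le_mul_of_nonneg_left (hmin (hsphere θ hθ hv)) (by positivity)

theorem IsCompact.exists_le_mul_norm_pow (hK : IsCompact K)
    (hcont : ContinuousOn (uncurry q) (K ×ˢ univ)) (hp : p ≠ 0)
    (hq : ∀ θ (c : ℝ), 0 ≤ c → ∀ v, q θ (c • v) = c ^ p * q θ v) :
    ∃ M > 0, ∀ θ ∈ K, ∀ v, q θ v ≤ M * ‖v‖ ^ p := by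
  obtain ⟨M, hM⟩ := (hK.prod (isCompact_sphere (0 : E) 1)).bddAbove_image
    (hcont.mono (prod_mono le_rfl (subset_univ _)))
  refine ⟨max M 1, by positivity, fun θ hθ v => ?_⟩
  rcases eq_or_ne v 0 with rfl | hv
  · simp [eq_zero_of_homogeneous hq hp, zero_pow hp]
  rw [eq_norm_pow_mul_of_homogeneous hq θ hv, mul_comm]
  refine mul_le_mul_of_nonneg_right ((hM ⟨(θ, ‖v‖⁻¹ • v), ⟨hθ, ?_⟩, rfl⟩).trans
    (le_max_left M 1)) (by positivity)
  simpa using norm_smul_inv_norm (𝕜 := ℝ) hv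

end Homogeneous

lemma euclNorm_eq_norm_toLp {n : ℕ} (v : Fin n → ℝ) : euclNorm v = ‖WithLp.toLp 2 v‖ := by
  simp [euclNorm, EuclideanSpace.norm_eq]

lemma euclNorm_nonneg {n : ℕ} (v : Fin n → ℝ) : 0 ≤ euclNorm v := Real.sqrt_nonneg _

lemma euclNorm_le_euclNorm_sub_add {n : ℕ} (v w : Fin n → ℝ) :
    euclNorm v ≤ euclNorm (v - w) + euclNorm w := by
  simpa [euclNorm_eq_norm_toLp] using norm_le_norm_sub_add (WithLp.toLp 2 v) (WithLp.toLp 2 w)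

lemma euclNorm_sub_comm {n : ℕ} (v w : Fin n → ℝ) : euclNorm (v - w) = euclNorm (w - v) := by
  simpa [euclNorm_eq_norm_toLp] using norm_sub_rev (WithLp.toLp 2 v) (WithLp.toLp 2 w)

lemma continuous_euclNorm {n : ℕ} : Continuous (euclNorm (n := n)) := by
  simp_rw [funext euclNorm_eq_norm_toLp]
  exact (PiLp.continuous_toLp 2 _).norm

lemma Matrix.mulVec_injective_of_posDef_transpose_mul_self {m n : Type*} [Fintype m] [Fintype n]
    {A : Matrix m n ℝ} (hA : (Aᵀ * A).PosDef) : Injective A.mulVec := by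
  refine (injective_iff_map_eq_zero' A.mulVecLin).2 fun v => ⟨fun hv => ?_, fun hv => by simp [hv]⟩
  by_contra hne
  simpa [← mulVec_mulVec, show A *ᵥ v = 0 from hv] using hA.dotProduct_mulVec_pos hne

lemma ContinuousOn.matrix_inv_of_det_ne_zero {X : Type*} [TopologicalSpace X] {K : Set X} {n : ℕ}
    {V : X → Matrix (Fin n) (Fin n) ℝ} (hV : ContinuousOn V K)
    (hdet : ∀ θ ∈ K, (V θ).det ≠ 0) : ContinuousOn (fun θ => (V θ)⁻¹) K := fun θ hθ =>
  (continuousAt_matrix_inv _ (by simpa [Ring.inverse_eq_inv'] using continuousAt_inv₀ (hdet θ hθ))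
    ).comp_continuousWithinAt (hV θ hθ)

lemma gaussDensity_nonneg {n : ℕ} (m : Fin n → ℝ) {V : Matrix (Fin n) (Fin n) ℝ}
    (hV : 0 ≤ V.det) (z : Fin n → ℝ) : 0 ≤ gaussDensity m V z :=
  mul_nonneg (Real.rpow_nonneg (by positivity) _) (Real.exp_pos _).le

lemma gaussDensity_le {n : ℕ} {m z : Fin n → ℝ} {V : Matrix (Fin n) (Fin n) ℝ} {N β : ℝ}
    (hN : ((2 * Real.pi) ^ n * V.det) ^ (-(1 : ℝ) / 2) ≤ N) (hN₀ : 0 ≤ N)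
    (hβ : β * euclNorm (z - m) ^ 2 ≤ (z - m) ⬝ᵥ V⁻¹ *ᵥ (z - m)) :
    gaussDensity m V z ≤ N * Real.exp (-(β / 2 * euclNorm (z - m) ^ 2)) :=
  mul_le_mul hN (Real.exp_le_exp.2 (by linarith)) (Real.exp_pos _).le hN₀

section UniformBounds

variable {X : Type*} [TopologicalSpace X] {K : Set X}

lemma ContinuousOn.uncurry_mulVec_ofLp {m n : ℕ} {A : X → Matrix (Fin m) (Fin n) ℝ}
    (hA : ContinuousOn A K) :
    ContinuousOn (uncurry fun θ (v : EuclideanSpace ℝ (Fin n)) => A θ *ᵥ v.ofLp) (K ×ˢ univ) :=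
  (continuous_fst.matrix_mulVec continuous_snd).comp_continuousOn
    ((hA.comp continuousOn_fst fun _ h => h.1).prodMk
      ((PiLp.continuous_ofLp 2 _).comp_continuousOn continuousOn_snd))

theorem IsCompact.exists_pos_mul_euclNorm_le_euclNorm_mulVec (hK : IsCompact K) {m n : ℕ}
    {A : X → Matrix (Fin m) (Fin n) ℝ} (hA : ContinuousOn A K)
    (hinj : ∀ θ ∈ K, Injective (A θ).mulVec) :
    ∃ a > 0, ∀ θ ∈ K, ∀ v, a * euclNorm v ≤ euclNorm (A θ *ᵥ v) := by
  obtain ⟨a, ha, h⟩ := hK.exists_pos_mul_norm_pow_le (p := 1)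
    (q := fun θ (v : EuclideanSpace ℝ (Fin n)) => euclNorm (A θ *ᵥ v.ofLp))
    (continuous_euclNorm.comp_continuousOn hA.uncurry_mulVec_ofLp) one_ne_zero
    (fun θ c hc v => by simp [euclNorm_eq_norm_toLp, mulVec_smul, norm_smul, abs_of_nonneg hc])
    (fun θ hθ v hv => by
      simpa [euclNorm_eq_norm_toLp] using (hinj θ hθ).ne (a₂ := 0) (by simpa using hv))
  exact ⟨a, ha, fun θ hθ v => by simpa [euclNorm_eq_norm_toLp] using h θ hθ (WithLp.toLp 2 v)⟩

theorem IsCompact.exists_euclNorm_mulVec_le (hK : IsCompact K) {m n : ℕ}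
    {A : X → Matrix (Fin m) (Fin n) ℝ} (hA : ContinuousOn A K) :
    ∃ c > 0, ∀ θ ∈ K, ∀ v, euclNorm (A θ *ᵥ v) ≤ c * euclNorm v := by
  obtain ⟨c, hc, h⟩ := hK.exists_le_mul_norm_pow (p := 1)
    (q := fun θ (v : EuclideanSpace ℝ (Fin n)) => euclNorm (A θ *ᵥ v.ofLp))
    (continuous_euclNorm.comp_continuousOn hA.uncurry_mulVec_ofLp) one_ne_zero
    (fun θ c hc v => by simp [euclNorm_eq_norm_toLp, mulVec_smul, norm_smul, abs_of_nonneg hc])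
  exact ⟨c, hc, fun θ hθ v => by simpa [euclNorm_eq_norm_toLp] using h θ hθ (WithLp.toLp 2 v)⟩

theorem IsCompact.exists_pos_mul_euclNorm_sq_le_dotProduct_mulVec (hK : IsCompact K) {n : ℕ}
    {W : X → Matrix (Fin n) (Fin n) ℝ} (hW : ContinuousOn W K) (hpd : ∀ θ ∈ K, (W θ).PosDef) :
    ∃ β > 0, ∀ θ ∈ K, ∀ v, β * euclNorm v ^ 2 ≤ v ⬝ᵥ W θ *ᵥ v := by
  obtain ⟨β, hβ, h⟩ := hK.exists_pos_mul_norm_pow_le (p := 2)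
    (q := fun θ (v : EuclideanSpace ℝ (Fin n)) => v.ofLp ⬝ᵥ W θ *ᵥ v.ofLp)
    ((continuous_fst.dotProduct continuous_snd).comp_continuousOn
      (((PiLp.continuous_ofLp 2 _).comp_continuousOn continuousOn_snd).prodMk
        hW.uncurry_mulVec_ofLp)) two_ne_zero
    (fun θ c hc v => by simp [mulVec_smul]; ring)
    (fun θ hθ v hv => by
      simpa using (hpd θ hθ).dotProduct_mulVec_pos (x := v.ofLp) (by simpa using hv))
  exact ⟨β, hβ, fun θ hθ v => by simpa [euclNorm_eq_norm_toLp] using h θ hθ (WithLp.toLp 2 v)⟩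

theorem IsCompact.exists_gaussDensity_le
    (hK : IsCompact K) {n : ℕ} {V : X → Matrix (Fin n) (Fin n) ℝ} (hV : ContinuousOn V K)
    (hpd : ∀ θ ∈ K, (V θ).PosDef) :
    ∃ N > 0, ∃ β > 0, ∀ θ ∈ K, ∀ m z,
      gaussDensity m (V θ) z ≤ N * Real.exp (-(β * euclNorm (z - m) ^ 2)) := by
  have hdet : ∀ θ ∈ K, 0 < (V θ).det := fun θ hθ => (hpd θ hθ).det_pos
  obtain ⟨N, hN⟩ := hK.bddAbove_image
    (((continuous_const.mul continuous_id.matrix_det).comp_continuousOn hV).rpow_const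
      (p := -(1 : ℝ) / 2) fun θ hθ => Or.inl (mul_pos (pow_pos Real.two_pi_pos n) (hdet θ hθ)).ne')
  obtain ⟨β, hβ, hquad⟩ := hK.exists_pos_mul_euclNorm_sq_le_dotProduct_mulVec
    (hV.matrix_inv_of_det_ne_zero fun θ hθ => (hdet θ hθ).ne') fun θ hθ => (hpd θ hθ).inv
  exact ⟨max N 1, by positivity, β / 2, by positivity, fun θ hθ m z =>
    gaussDensity_le ((hN ⟨θ, hθ, rfl⟩).trans (le_max_left N 1)) (by positivity)
      (hquad θ hθ (z - m))⟩

end UniformBounds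

lemma exists_mul_exp_neg_le {N βB βD κ₂ : ℝ} (hN : 0 < N) (hβB : 0 < βB) (hβD : 0 < βD)
    (hκ₂ : 0 ≤ κ₂) :
    ∃ κ₁ > 0, ∀ t u nx ny : ℝ, 0 ≤ nx → nx ≤ u + κ₂ * (t + ny) →
      N * Real.exp (-(βB * t ^ 2 + βD * u ^ 2)) ≤
        κ₁ * Real.exp (κ₁ * ny ^ 2) * Real.exp (-(nx - κ₂ * ny) ^ 2 / κ₁) := by
  have h2D : 0 < 2 / βD := by positivity
  have h2B : 0 ≤ 2 * κ₂ ^ 2 / βB := by positivity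
  set κ₁ := N + 2 / βD + 2 * κ₂ ^ 2 / βB + κ₂ with hκ₁_def
  have hκ₁ : 0 < κ₁ := by linarith
  have hD : 2 ≤ κ₁ * βD := by rw [← div_le_iff₀ hβD]; linarith
  have hB : 2 * κ₂ ^ 2 ≤ κ₁ * βB := by rw [← div_le_iff₀ hβB]; linarith
  refine ⟨κ₁, hκ₁, fun t u nx ny hnx hs => ?_⟩
  -- `nx - κ₂ * ny` lies in `[-κ₂ * ny, u + κ₂ * t]`
  have hsq : (nx - κ₂ * ny) ^ 2 ≤ (u + κ₂ * t) ^ 2 + (κ₂ * ny) ^ 2 := by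
    rcases le_total 0 (nx - κ₂ * ny) with h | h <;> nlinarith
  have hexp : -(βB * t ^ 2 + βD * u ^ 2) ≤ κ₁ * ny ^ 2 + -(nx - κ₂ * ny) ^ 2 / κ₁ := by
    have key : (nx - κ₂ * ny) ^ 2 / κ₁ ≤ βB * t ^ 2 + βD * u ^ 2 + κ₁ * ny ^ 2 := by
      rw [div_le_iff₀ hκ₁]
      have hκ₂₁ : κ₂ ≤ κ₁ := by linarith
      nlinarith [sq_nonneg (u - κ₂ * t), mul_le_mul_of_nonneg_right hD (sq_nonneg u),
        mul_le_mul_of_nonneg_right hB (sq_nonneg t),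
        mul_le_mul_of_nonneg_right (pow_le_pow_left₀ hκ₂ hκ₂₁ 2) (sq_nonneg ny)]
    linarith [neg_div κ₁ ((nx - κ₂ * ny) ^ 2)]
  rw [mul_assoc, ← Real.exp_add]
  exact mul_le_mul (by linarith) (Real.exp_le_exp.2 hexp) (Real.exp_pos _).le hκ₁.le

lemma euclNorm_le_of_mulVec_bounds {m n : ℕ} {A : Matrix (Fin m) (Fin n) ℝ}
    {C : Matrix (Fin n) (Fin n) ℝ} {a c : ℝ} {x x' : Fin n → ℝ} (y : Fin m → ℝ) (ha : 0 < a)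
    (hc : 0 ≤ c) (hA : a * euclNorm x' ≤ euclNorm (A *ᵥ x'))
    (hC : euclNorm (C *ᵥ x') ≤ c * euclNorm x') :
    euclNorm x ≤ euclNorm (x - C *ᵥ x') + c / a * (euclNorm (y - A *ᵥ x') + euclNorm y) := by
  have hAy : euclNorm (A *ᵥ x') ≤ euclNorm (y - A *ᵥ x') + euclNorm y := by
    simpa [euclNorm_sub_comm] using euclNorm_le_euclNorm_sub_add (A *ᵥ x') y
  have hca : c / a * (a * euclNorm x') = c * euclNorm x' := by field_simp
  calc euclNorm x ≤ euclNorm (x - C *ᵥ x') + euclNorm (C *ᵥ x') :=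
        euclNorm_le_euclNorm_sub_add x (C *ᵥ x')
    _ ≤ euclNorm (x - C *ᵥ x') + c / a * (a * euclNorm x') := by rw [hca]; gcongr
    _ ≤ euclNorm (x - C *ᵥ x') + c / a * (euclNorm (y - A *ᵥ x') + euclNorm y) := by
        gcongr; exact hA.trans hAy

theorem stmt12_general (d dx dy : ℕ) (Θ : Set (Fin d → ℝ)) (hcp : IsCompact Θ)
    (A : (Fin d → ℝ) → Matrix (Fin dy) (Fin dx) ℝ)
    (B : (Fin d → ℝ) → Matrix (Fin dy) (Fin dy) ℝ)
    (C : (Fin d → ℝ) → Matrix (Fin dx) (Fin dx) ℝ)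
    (Dm : (Fin d → ℝ) → Matrix (Fin dx) (Fin dx) ℝ)
    (hA : ∀ i j, ContinuousOn (fun θ => A θ i j) Θ)
    (hB : ∀ i j, ContinuousOn (fun θ => B θ i j) Θ)
    (hC : ∀ i j, ContinuousOn (fun θ => C θ i j) Θ)
    (hD : ∀ i j, ContinuousOn (fun θ => Dm θ i j) Θ)
    (hBpd : ∀ θ ∈ Θ, (B θ).PosDef) (hDpd : ∀ θ ∈ Θ, (Dm θ).PosDef)
    (hApd : ∀ θ ∈ Θ, ((A θ)ᵀ * A θ).PosDef) :
    ∃ κ₁ : ℝ, 0 < κ₁ ∧ ∃ κ₂ : ℝ, 0 < κ₂ ∧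
      ∀ θ ∈ Θ, ∀ (x x' : Fin dx → ℝ) (y : Fin dy → ℝ),
        gaussDensity (A θ *ᵥ x') (B θ) y * gaussDensity (C θ *ᵥ x') (Dm θ) x ≤
          κ₁ * Real.exp (κ₁ * euclNorm y ^ 2) *
            Real.exp (-(euclNorm x - κ₂ * euclNorm y) ^ 2 / κ₁) := by
  have hcont {m n : ℕ} {M : (Fin d → ℝ) → Matrix (Fin m) (Fin n) ℝ}
      (hM : ∀ i j, ContinuousOn (fun θ => M θ i j) Θ) : ContinuousOn M Θ :=
    continuousOn_pi.2 fun i => continuousOn_pi.2 (hM i)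
  obtain ⟨NB, hNB, βB, hβB, hgB⟩ := hcp.exists_gaussDensity_le (hcont hB) hBpd
  obtain ⟨ND, hND, βD, hβD, hgD⟩ := hcp.exists_gaussDensity_le (hcont hD) hDpd
  obtain ⟨a, ha, hAlow⟩ := hcp.exists_pos_mul_euclNorm_le_euclNorm_mulVec (hcont hA)
    fun θ hθ => mulVec_injective_of_posDef_transpose_mul_self (hApd θ hθ)
  obtain ⟨c, hc, hCup⟩ := hcp.exists_euclNorm_mulVec_le (hcont hC)
  obtain ⟨κ₁, hκ₁, hexp⟩ := exists_mul_exp_neg_le (mul_pos hNB hND) hβB hβD (div_pos hc ha).le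
  refine ⟨κ₁, hκ₁, c / a, div_pos hc ha, fun θ hθ x x' y => ?_⟩
  calc gaussDensity (A θ *ᵥ x') (B θ) y * gaussDensity (C θ *ᵥ x') (Dm θ) x
      ≤ NB * Real.exp (-(βB * euclNorm (y - A θ *ᵥ x') ^ 2)) *
          (ND * Real.exp (-(βD * euclNorm (x - C θ *ᵥ x') ^ 2))) :=
        mul_le_mul (hgB θ hθ _ _) (hgD θ hθ _ _) (gaussDensity_nonneg _ (hDpd θ hθ).det_pos.le _)
          (by positivity)
    _ = NB * ND * Real.exp (-(βB * euclNorm (y - A θ *ᵥ x') ^ 2 +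
          βD * euclNorm (x - C θ *ᵥ x') ^ 2)) := by
        rw [mul_mul_mul_comm, ← Real.exp_add, neg_add]
    _ ≤ _ := hexp _ _ _ _ (euclNorm_nonneg x)
        (euclNorm_le_of_mulVec_bounds y ha hc.le (hAlow θ hθ x') (hCup θ hθ x'))

theorem stmt12 (d dx dy : ℕ) (Θ : Set (Fin d → ℝ)) (hne : Θ.Nonempty) (hcp : IsCompact Θ)
    (A : (Fin d → ℝ) → Matrix (Fin dy) (Fin dx) ℝ)
    (B : (Fin d → ℝ) → Matrix (Fin dy) (Fin dy) ℝ)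
    (C : (Fin d → ℝ) → Matrix (Fin dx) (Fin dx) ℝ)
    (Dm : (Fin d → ℝ) → Matrix (Fin dx) (Fin dx) ℝ)
    (hA : ∀ i j, ContinuousOn (fun θ => A θ i j) Θ)
    (hB : ∀ i j, ContinuousOn (fun θ => B θ i j) Θ)
    (hC : ∀ i j, ContinuousOn (fun θ => C θ i j) Θ)
    (hD : ∀ i j, ContinuousOn (fun θ => Dm θ i j) Θ)
    (hBpd : ∀ θ ∈ Θ, (B θ).PosDef) (hDpd : ∀ θ ∈ Θ, (Dm θ).PosDef)
    (hApd : ∀ θ ∈ Θ, ((A θ)ᵀ * A θ).PosDef) :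
    ∃ κ₁ : ℝ, 0 < κ₁ ∧ ∃ κ₂ : ℝ, 0 < κ₂ ∧
      ∀ θ ∈ Θ, ∀ (x x' : Fin dx → ℝ) (y : Fin dy → ℝ),
        gaussDensity (A θ *ᵥ x') (B θ) y * gaussDensity (C θ *ᵥ x') (Dm θ) x ≤
          κ₁ * Real.exp (κ₁ * euclNorm y ^ 2) *
            Real.exp (-(euclNorm x - κ₂ * euclNorm y) ^ 2 / κ₁) :=
  stmt12_general d dx dy Θ hcp A B C Dm hA hB hC hD hBpd hDpd hApd
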